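/- Let Y ⊆ W be closed and u ∈ W a segment of distance at least 4 to Y in G. Then cl(Y ∪ {u}) = Y ∪ {u} and u forms a singleton component of Y ∪ {u}. -/

import Mathlib

variable {V W : Type*}

/-- The incidence graph of a bipartite constraint graph given by neighborhoods `N`. -/
def biGraph (N : V → Set W) : SimpleGraph (V ⊕ W) :=
  SimpleGraph.fromRel (fun a b =>
    match a, b with
    | Sum.inl v, Sum.inr w => w ∈ N v
    | _, _ => False)

/-- The attractor of a set of segments. -/
def attractor (N : V → Set W) (X : Set W) : Set W :=
  X ∪ ⋃ v ∈ {v : V | (N v \ X).ncard ≤ 1}, N v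

/-- A set of segments is closed if it equals its attractor. -/
def IsClosedSeg (N : V → Set W) (X : Set W) : Prop := attractor N X = X

/-- The closure of a set of segments: the minimal closed superset. -/
def clW (N : V → Set W) (X : Set W) : Set W := ⋂₀ {Y | X ⊆ Y ∧ IsClosedSeg N Y}

/-- `G` is `k`-meager. -/
def Meager (N : V → Set W) (k : ℕ) : Prop :=
  ∀ X : Set W, X.ncard ≤ 2 * k → {v : V | N v ⊆ X}.ncard ≤ 2 * X.ncard

/-- `X` is `k`-scattered: distinct segments of `X` have pairwise distance at least `2k`. -/
def Scattered (N : V → Set W) (k : ℕ) (X : Set W) : Prop :=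
  ∀ u ∈ X, ∀ w ∈ X, u ≠ w →
    ((2 * k : ℕ) : ℕ∞) ≤ (biGraph N).edist (Sum.inr u) (Sum.inr w)

/-- The vertices of the feet-induced subgraph on a set `X` of segments:
all segments of `X` and all constraint vertices all whose neighbors lie in `X`. -/
def footVerts (N : V → Set W) (X : Set W) : Set (V ⊕ W) :=
  Sum.inr '' X ∪ Sum.inl '' {v | N v ⊆ X}

/-- `Y` is a component of `X`: the feet-induced subgraph on `Y` is a connected
component of the feet-induced subgraph on `X`. -/
def IsComponent (N : V → Set W) (X Y : Set W) : Prop :=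
  Y ⊆ X ∧
  ∃ C : ((biGraph N).induce (footVerts N X)).ConnectedComponent,
    footVerts N Y =
      Subtype.val '' {a | ((biGraph N).induce (footVerts N X)).connectedComponentMk a = C}

lemma biGraph_adj_inl_inr (N : V → Set W) (v : V) (w : W) :
    (biGraph N).Adj (Sum.inl v) (Sum.inr w) ↔ w ∈ N v := by
  simp [biGraph, SimpleGraph.fromRel_adj]

lemma no_common_neighbor (N : V → Set W) {u y : W} {v : V}
    (hu : u ∈ N v) (hy : y ∈ N v)
    (hfar : (4 : ℕ∞) ≤ (biGraph N).edist (Sum.inr u) (Sum.inr y)) : False := by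
  by_cases h : u = y
  · subst h
    rw [SimpleGraph.edist_self] at hfar
    simp at hfar
  · have a1 : (biGraph N).Adj (Sum.inr u) (Sum.inl v) :=
      ((biGraph_adj_inl_inr N v u).mpr hu).symm
    have a2 : (biGraph N).Adj (Sum.inl v) (Sum.inr y) :=
      (biGraph_adj_inl_inr N v y).mpr hy
    have hw := SimpleGraph.edist_le (a1.toWalk.append a2.toWalk)
    simp [SimpleGraph.Walk.length_append] at hw
    have : (4 : ℕ∞) ≤ 2 := hfar.trans hw
    norm_num at this

lemma isolated_component {α : Type*} {G : SimpleGraph α} {a : α}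
    (h : ∀ b, ¬ G.Adj a b) :
    {x | G.connectedComponentMk x = G.connectedComponentMk a} = {a} := by
  ext b
  simp only [Set.mem_setOf_eq, Set.mem_singleton_iff]
  constructor
  · intro hb
    have hr : G.Reachable a b := (SimpleGraph.ConnectedComponent.eq.mp hb).symm
    obtain ⟨w⟩ := hr
    cases w with
    | nil => rfl
    | cons hadj _ => exact absurd hadj (h _)
  · rintro rfl; rfl

/-- If `Y` is closed and the segment `u` has distance at least 4 to `Y`
in `G`, then `cl(Y ∪ {u}) = Y ∪ {u}` and `u` forms a singleton component of `Y ∪ {u}`. -/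
theorem closure_insert_far_segment {V W : Type*}
    (N : V → Set W) (hdeg : ∀ v, (N v).ncard = 3)
    (Y : Set W) (hY : IsClosedSeg N Y) (u : W)
    (hfar : ∀ w ∈ Y, (4 : ℕ∞) ≤ (biGraph N).edist (Sum.inr u) (Sum.inr w)) :
    clW N (Y ∪ {u}) = Y ∪ {u} ∧ IsComponent N (Y ∪ {u}) {u} := by
  have hNfin : ∀ v : V, (N v).Finite := fun v =>
    Set.finite_of_ncard_ne_zero (by rw [hdeg v]; norm_num)
  -- if u ∈ N v then N v is disjoint from Y
  have hdisj : ∀ v : V, u ∈ N v → ∀ y ∈ N v, y ∉ Y := by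
    intro v hu y hy hyY
    exact no_common_neighbor N hu hy (hfar y hyY)
  -- key closedness condition extracted from hY
  have hYc : ∀ v : V, (N v \ Y).ncard ≤ 1 → N v ⊆ Y := by
    intro v hv
    have : N v ⊆ attractor N Y := by
      intro x hx
      exact Or.inr (Set.mem_biUnion hv hx)
    rwa [hY] at this
  have hclosed : IsClosedSeg N (Y ∪ {u}) := by
    unfold IsClosedSeg attractor
    rw [Set.union_eq_left]
    intro x hx
    simp only [Set.mem_iUnion, Set.mem_setOf_eq, exists_prop] at hx
    obtain ⟨v, hv1, hv2⟩ := hx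
    by_cases hu : u ∈ N v
    · exfalso
      have hsub : N v \ (Y ∪ {u}) = N v \ {u} := by
        ext x
        simp only [Set.mem_diff, Set.mem_union, Set.mem_singleton_iff]
        constructor
        · rintro ⟨hx1, hx2⟩; exact ⟨hx1, fun h => hx2 (Or.inr h)⟩
        · rintro ⟨hx1, hx2⟩; exact ⟨hx1, fun h => h.elim (hdisj v hu x hx1) hx2⟩
      rw [hsub, Set.ncard_diff_singleton_of_mem hu, hdeg v] at hv1
      omega
    · have hsub : N v \ (Y ∪ {u}) = N v \ Y := by
        ext x
        simp only [Set.mem_diff, Set.mem_union, Set.mem_singleton_iff]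
        constructor
        · rintro ⟨hx1, hx2⟩; exact ⟨hx1, fun h => hx2 (Or.inl h)⟩
        · rintro ⟨hx1, hx2⟩
          refine ⟨hx1, ?_⟩
          rintro (h | rfl)
          exacts [hx2 h, hu hx1]
      rw [hsub] at hv1
      exact Or.inl (hYc v hv1 hv2)
  constructor
  · apply subset_antisymm
    · exact Set.sInter_subset_of_mem ⟨subset_rfl, hclosed⟩
    · exact Set.subset_sInter fun Z hZ => hZ.1
  · refine ⟨Set.subset_union_right, ?_⟩
    have hmem : (Sum.inr u : V ⊕ W) ∈ footVerts N (Y ∪ {u}) :=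
      Or.inl ⟨u, Or.inr rfl, rfl⟩
    set G' := (biGraph N).induce (footVerts N (Y ∪ {u})) with hG'
    refine ⟨G'.connectedComponentMk ⟨Sum.inr u, hmem⟩, ?_⟩
    have hiso : ∀ b, ¬ G'.Adj ⟨Sum.inr u, hmem⟩ b := by
      rintro ⟨b, hb⟩ hadj
      have hadj' : (biGraph N).Adj (Sum.inr u) b := hadj
      match b with
      | Sum.inr w =>
        simp [biGraph, SimpleGraph.fromRel_adj] at hadj'
      | Sum.inl v =>
        have hu : u ∈ N v := (biGraph_adj_inl_inr N v u).mp hadj'.symm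
        have hNv : N v ⊆ Y ∪ {u} := by
          rcases hb with ⟨w, _, hw⟩ | ⟨v', hv', he⟩
          · exact absurd hw (by simp)
          · cases Sum.inl_injective he; exact hv'
        have h2 : (N v \ {u}).ncard = 2 := by
          rw [Set.ncard_diff_singleton_of_mem hu, hdeg v]
        have hne : (N v \ {u}).Nonempty := by
          apply Set.nonempty_of_ncard_ne_zero; omega
        obtain ⟨y, hy, hyu⟩ := hne
        have hyY : y ∈ Y := by
          rcases hNv hy with h | h
          · exact h
          · exact absurd h hyu
        exact hdisj v hu y hy hyY
    have hset : {a | G'.connectedComponentMk a = G'.connectedComponentMk ⟨Sum.inr u, hmem⟩}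
        = {(⟨Sum.inr u, hmem⟩ : footVerts N (Y ∪ {u}))} := isolated_component hiso
    rw [hset]
    have hfoot : footVerts N {u} = {Sum.inr u} := by
      unfold footVerts
      ext a
      simp only [Set.mem_union, Set.mem_image, Set.mem_setOf_eq, Set.mem_singleton_iff]
      constructor
      · rintro (⟨w, rfl, rfl⟩ | ⟨v, hv, rfl⟩)
        · rfl
        · exfalso
          have : (N v).ncard ≤ ({u} : Set W).ncard :=
            Set.ncard_le_ncard hv (Set.finite_singleton u)
          rw [hdeg v, Set.ncard_singleton] at this
          omega
      · rintro rfl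
        exact Or.inl ⟨u, rfl, rfl⟩
    rw [hfoot, Set.image_singleton]
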